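/- arXiv:1111.1390 — 8 statements merged into one kernel-verified Lean document; each statement's English description precedes it below -/
import Mathlib

section
/- Let ≼ be a partial order on a nonempty set X with asymmetric part P_≼, and let S be an equivalence relation on X satisfying P_≼ ∘ S = S ∘ P_≼ = P_≼. Then there exists a total preorder S-extension of ≼, i.e., a total preorder ≾ on X with P_≼ ⊆ P_≾ and S_≾ = S. -/
variable {X : Type*}

/-- `G` is a preorder: reflexive and transitive. -/
def IsPreorderRel (G : Set (X × X)) : Prop :=
  (∀ x, (x, x) ∈ G) ∧ ∀ x y z, (x, y) ∈ G → (y, z) ∈ G → (x, z) ∈ G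

/-- `G` is a partial order: an antisymmetric preorder. -/
def IsPartialOrderRel (G : Set (X × X)) : Prop :=
  IsPreorderRel G ∧ ∀ x y, (x, y) ∈ G → (y, x) ∈ G → x = y

/-- `G` is total. -/
def IsTotalRel (G : Set (X × X)) : Prop :=
  ∀ x y, (x, y) ∈ G ∨ (y, x) ∈ G

/-- `S` is an equivalence relation (as a set of pairs). -/
def IsEquivRel (S : Set (X × X)) : Prop :=
  (∀ x, (x, x) ∈ S) ∧ (∀ x y, (x, y) ∈ S → (y, x) ∈ S) ∧
    ∀ x y z, (x, y) ∈ S → (y, z) ∈ S → (x, z) ∈ S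

/-- The asymmetric part `P_G` of `G`. -/
def asymPart (G : Set (X × X)) : Set (X × X) :=
  {p | p ∈ G ∧ (p.2, p.1) ∉ G}

/-- The symmetric part `S_G` of `G`. -/
def symPart (G : Set (X × X)) : Set (X × X) :=
  {p | p ∈ G ∧ (p.2, p.1) ∈ G}

/-- Composition of relations: `(x, y) ∈ A ∘ B ↔ ∃ z, (x, z) ∈ A ∧ (z, y) ∈ B`. -/
def relComp (A B : Set (X × X)) : Set (X × X) :=
  {p | ∃ z, (p.1, z) ∈ A ∧ (z, p.2) ∈ B}

/-- The indifference relation `I_G`. -/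
def indiff (G : Set (X × X)) : Set (X × X) :=
  {p | p ∉ asymPart G ∧ (p.2, p.1) ∉ asymPart G}

/-- The equipotency relation `R_G`. -/
def equipot (G : Set (X × X)) : Set (X × X) :=
  {p | {z | (p.1, z) ∈ indiff G} = {z | (p.2, z) ∈ indiff G}}

/-- `T` is a total preorder `S`-extension of the partial order `pr`. -/
def IsSExtension (pr S T : Set (X × X)) : Prop :=
  IsPreorderRel T ∧ IsTotalRel T ∧ asymPart pr ⊆ asymPart T ∧ symPart T = S

/-- `G` is acyclic: for any chain `x 0, …, x n` of `G`-related consecutive points,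
`(x n, x 0) ∉ G`. -/
def IsAcyclicRel (G : Set (X × X)) : Prop :=
  ∀ (n : ℕ) (x : Fin (n + 1) → X),
    (∀ i : Fin n, (x i.castSucc, x i.succ) ∈ G) → (x (Fin.last n), x 0) ∉ G

/-- The transitive hull of `G`: the smallest transitive relation containing `G`. -/
def TransHull (G : Set (X × X)) : Set (X × X) :=
  {p | Relation.TransGen (fun a b => (a, b) ∈ G) p.1 p.2}

/-- `G` is negatively transitive: the complement of `G` is transitive. -/
def IsNegTransRel (G : Set (X × X)) : Prop :=
  ∀ x y z, (x, y) ∉ G → (y, z) ∉ G → (x, z) ∉ G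

/-- `Σ(≼)`: equivalence relations `S` with `S ∘ P_≼ ∘ S` irreflexive. -/
def SigmaCol (pr : Set (X × X)) : Set (Set (X × X)) :=
  {S | IsEquivRel S ∧ ∀ x, (x, x) ∉ relComp S (relComp (asymPart pr) S)}

/-- `Σ*(≼)`: equivalence relations `S` with `S ∘ P_≼ ∘ S` acyclic. -/
def SigmaStar (pr : Set (X × X)) : Set (Set (X × X)) :=
  {S | IsEquivRel S ∧ IsAcyclicRel (relComp S (relComp (asymPart pr) S))}

/-!
Since `P_≼ ∘ S = S ∘ P_≼ = P_≼`, the relation `P_≼ ∪ S` is a preorder; its symmetric part is `S`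
and its asymmetric part contains `P_≼`. Every preorder extends to a total preorder with the same
symmetric part: its antisymmetrization is a partial order, Szpilrajn's theorem extends that to a
linear order, and the pullback of this linear order to `X` is the required total preorder.
-/

theorem toAntisymmetrization_eq_iff {α : Type*} [Preorder α] {a b : α} :
    toAntisymmetrization (· ≤ ·) a = toAntisymmetrization (· ≤ ·) b ↔ AntisymmRel (· ≤ ·) a b :=
  Quotient.eq

theorem toLinearExtension_injective {α : Type*} [PartialOrder α] :
    Function.Injective (toLinearExtension : α → LinearExtension α) :=
  fun _ _ => id

theorem strictMono_toLinearExtension {α : Type*} [PartialOrder α] :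
    StrictMono (toLinearExtension : α → LinearExtension α) :=
  toLinearExtension.monotone.strictMono_of_injective toLinearExtension_injective

section Comap

variable {β : Type*} (f : X → β)

theorem isPreorderRel_comap_le [Preorder β] : IsPreorderRel {p : X × X | f p.1 ≤ f p.2} :=
  ⟨fun _ => le_rfl, fun _ _ _ => le_trans⟩

theorem isTotalRel_comap_le [LinearOrder β] : IsTotalRel {p : X × X | f p.1 ≤ f p.2} :=
  fun _ _ => le_total _ _

theorem asymPart_comap_le [Preorder β] :
    asymPart {p : X × X | f p.1 ≤ f p.2} = {p | f p.1 < f p.2} := by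
  ext; simp [asymPart, lt_iff_le_not_ge]

theorem symPart_comap_le [PartialOrder β] :
    symPart {p : X × X | f p.1 ≤ f p.2} = {p | f p.1 = f p.2} := by
  ext; simp [symPart, le_antisymm_iff]

end Comap

theorem exists_isSExtension_symPart {R : Set (X × X)} (hR : IsPreorderRel R) :
    ∃ T, IsSExtension R (symPart R) T := by
  let _ : Preorder X := { le := fun x y => (x, y) ∈ R, le_refl := hR.1, le_trans := hR.2 }
  let f : X → LinearExtension (Antisymmetrization X (· ≤ ·)) :=
    fun x => toLinearExtension (toAntisymmetrization (· ≤ ·) x)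
  refine ⟨{p | f p.1 ≤ f p.2}, isPreorderRel_comap_le f, isTotalRel_comap_le f, ?_, ?_⟩
  · rw [asymPart_comap_le]
    rintro ⟨x, y⟩ hxy
    exact strictMono_toLinearExtension (toAntisymmetrization_lt_toAntisymmetrization_iff.2 hxy)
  · rw [symPart_comap_le]
    ext ⟨x, y⟩
    exact toLinearExtension_injective.eq_iff.trans toAntisymmetrization_eq_iff

theorem self_notMem_asymPart (G : Set (X × X)) (x : X) : (x, x) ∉ asymPart G :=
  fun h => h.2 h.1

theorem asymPart_trans {G : Set (X × X)} (hG : ∀ x y z, (x, y) ∈ G → (y, z) ∈ G → (x, z) ∈ G)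
    (x y z : X) (hxy : (x, y) ∈ asymPart G) (hyz : (y, z) ∈ asymPart G) :
    (x, z) ∈ asymPart G :=
  ⟨hG _ _ _ hxy.1 hyz.1, fun hzx => hyz.2 (hG _ _ _ hzx hxy.1)⟩

section StrictUnion

variable {P S : Set (X × X)} (hP : ∀ x y z, (x, y) ∈ P → (y, z) ∈ P → (x, z) ∈ P)
  (hPS : relComp P S ⊆ P)
include hP hPS

theorem isPreorderRel_union (hS : IsPreorderRel S) (hSP : relComp S P ⊆ P) :
    IsPreorderRel (P ∪ S) := by
  refine ⟨fun x => Or.inr (hS.1 x), ?_⟩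
  rintro x y z (hxy | hxy) (hyz | hyz)
  · exact Or.inl (hP _ _ _ hxy hyz)
  · exact Or.inl (hPS ⟨y, hxy, hyz⟩)
  · exact Or.inl (hSP ⟨y, hxy, hyz⟩)
  · exact Or.inr (hS.2 _ _ _ hxy hyz)

theorem symPart_union (hPirr : ∀ x, (x, x) ∉ P) (hSsymm : ∀ x y, (x, y) ∈ S → (y, x) ∈ S) :
    symPart (P ∪ S) = S := by
  ext ⟨x, y⟩
  refine ⟨?_, fun hxy => ⟨Or.inr hxy, Or.inr (hSsymm _ _ hxy)⟩⟩
  rintro ⟨hxy | hxy, hyx | hyx⟩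
  · exact absurd (hP _ _ _ hxy hyx) (hPirr x)
  · exact absurd (hPS ⟨y, hxy, hyx⟩) (hPirr x)
  · exact absurd (hPS ⟨x, hyx, hxy⟩) (hPirr y)
  · exact hxy

theorem subset_asymPart_union (hPirr : ∀ x, (x, x) ∉ P) : P ⊆ asymPart (P ∪ S) := by
  rintro ⟨x, y⟩ hxy
  refine ⟨Or.inl hxy, ?_⟩
  rintro (hyx | hyx)
  · exact hPirr x (hP _ _ _ hxy hyx)
  · exact hPirr x (hPS ⟨y, hxy, hyx⟩)

end StrictUnion

theorem exists_total_preorder_S_extension_general (pr S : Set (X × X))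
    (hpr : IsPartialOrderRel pr) (hS : IsEquivRel S)
    (h1 : relComp (asymPart pr) S = asymPart pr)
    (h2 : relComp S (asymPart pr) = asymPart pr) :
    ∃ T : Set (X × X), IsSExtension pr S T := by
  have hP := asymPart_trans hpr.1.2
  obtain ⟨T, hTpre, hTtot, hRT, hTsym⟩ :=
    exists_isSExtension_symPart (isPreorderRel_union hP h1.subset ⟨hS.1, hS.2.2⟩ h2.subset)
  refine ⟨T, hTpre, hTtot, ?_, ?_⟩
  · exact (subset_asymPart_union hP h1.subset (self_notMem_asymPart pr)).trans hRT
  · rw [hTsym, symPart_union hP h1.subset (self_notMem_asymPart pr) hS.2.1]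

theorem exists_total_preorder_S_extension [Nonempty X] (pr S : Set (X × X))
    (hpr : IsPartialOrderRel pr) (hS : IsEquivRel S)
    (h1 : relComp (asymPart pr) S = asymPart pr)
    (h2 : relComp S (asymPart pr) = asymPart pr) :
    ∃ T : Set (X × X), IsSExtension pr S T :=
  exists_total_preorder_S_extension_general pr S hpr hS h1 h2
end

section
/- Let ≾ be a preorder on a nonempty set X with asymmetric part P_≾. An equivalence relation S on X satisfies the equalities P_≾ ∘ S = S ∘ P_≾ = P_≾ if and only if S ⊆ R_≾, where R_≾ is the equipotency relation of ≾. -/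
variable {X : Type*}

section Relations

variable {G S : Set (X × X)} {x y z w : X}

lemma mem_indiff_self (G : Set (X × X)) (x : X) : (x, x) ∈ indiff G :=
  ⟨fun h => h.2 h.1, fun h => h.2 h.1⟩

lemma notMem_indiff_iff :
    (x, y) ∉ indiff G ↔ (x, y) ∈ asymPart G ∨ (y, x) ∈ asymPart G := by
  simp only [indiff, Set.mem_ofPred_eq]
  tauto

lemma mem_equipot_iff :
    (x, y) ∈ equipot G ↔ ∀ w, (x, w) ∈ indiff G ↔ (y, w) ∈ indiff G := by
  simp only [equipot, Set.ext_iff, Set.mem_ofPred_eq]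

lemma subset_relComp_right (hS : ∀ x, (x, x) ∈ S) (A : Set (X × X)) : A ⊆ relComp A S :=
  fun p hp => ⟨p.2, hp, hS p.2⟩

lemma subset_relComp_left (hS : ∀ x, (x, x) ∈ S) (A : Set (X × X)) : A ⊆ relComp S A :=
  fun p hp => ⟨p.1, hS p.1, hp⟩

lemma mem_asymPart_trans (htrans : ∀ x y z, (x, y) ∈ G → (y, z) ∈ G → (x, z) ∈ G)
    (hxy : (x, y) ∈ asymPart G) (hyz : (y, z) ∈ asymPart G) : (x, z) ∈ asymPart G :=
  ⟨htrans _ _ _ hxy.1 hyz.1, fun hzx => hyz.2 (htrans _ _ _ hzx hxy.1)⟩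

/-- `y` is not indifferent to `x` because `z` is not, and `y ≺ x` would give `y ≺ z`,
contradicting `y ~ z`. -/
lemma mem_asymPart_of_mem_equipot_right (htrans : ∀ x y z, (x, y) ∈ G → (y, z) ∈ G → (x, z) ∈ G)
    (hxz : (x, z) ∈ asymPart G) (hzy : (z, y) ∈ equipot G) : (x, y) ∈ asymPart G := by
  have hyx : (y, x) ∉ indiff G := fun h =>
    notMem_indiff_iff.2 (Or.inr hxz) ((mem_equipot_iff.1 hzy x).2 h)
  have hyz : (y, z) ∈ indiff G := (mem_equipot_iff.1 hzy z).1 (mem_indiff_self G z)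
  rcases notMem_indiff_iff.1 hyx with hyx | hxy
  · exact absurd hyz (notMem_indiff_iff.2 (Or.inl (mem_asymPart_trans htrans hyx hxz)))
  · exact hxy

lemma mem_asymPart_of_mem_equipot_left (htrans : ∀ x y z, (x, y) ∈ G → (y, z) ∈ G → (x, z) ∈ G)
    (hxz : (x, z) ∈ equipot G) (hzy : (z, y) ∈ asymPart G) : (x, y) ∈ asymPart G := by
  have hxy : (x, y) ∉ indiff G := fun h =>
    notMem_indiff_iff.2 (Or.inl hzy) ((mem_equipot_iff.1 hxz y).1 h)
  have hzx : (z, x) ∈ indiff G := (mem_equipot_iff.1 hxz x).1 (mem_indiff_self G x)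
  rcases notMem_indiff_iff.1 hxy with hxy | hyx
  · exact hxy
  · exact absurd hzx (notMem_indiff_iff.2 (Or.inl (mem_asymPart_trans htrans hzy hyx)))

lemma relComp_asymPart_left_subset (htrans : ∀ x y z, (x, y) ∈ G → (y, z) ∈ G → (x, z) ∈ G)
    (hSR : S ⊆ equipot G) : relComp (asymPart G) S ⊆ asymPart G :=
  fun _ ⟨_, hxz, hzy⟩ => mem_asymPart_of_mem_equipot_right htrans hxz (hSR hzy)

lemma relComp_asymPart_right_subset (htrans : ∀ x y z, (x, y) ∈ G → (y, z) ∈ G → (x, z) ∈ G)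
    (hSR : S ⊆ equipot G) : relComp S (asymPart G) ⊆ asymPart G :=
  fun _ ⟨_, hxz, hzy⟩ => mem_asymPart_of_mem_equipot_left htrans (hSR hxz) hzy

lemma mem_indiff_of_relComp_asymPart_subset (hS : ∀ x y, (x, y) ∈ S → (y, x) ∈ S)
    (hPS : relComp (asymPart G) S ⊆ asymPart G) (hSP : relComp S (asymPart G) ⊆ asymPart G)
    (hxy : (x, y) ∈ S) (hxw : (x, w) ∈ indiff G) : (y, w) ∈ indiff G :=
  ⟨fun hyw => hxw.1 (hSP ⟨y, hxy, hyw⟩), fun hwy => hxw.2 (hPS ⟨y, hwy, hS _ _ hxy⟩)⟩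

lemma subset_equipot_of_relComp_asymPart_subset (hS : ∀ x y, (x, y) ∈ S → (y, x) ∈ S)
    (hPS : relComp (asymPart G) S ⊆ asymPart G) (hSP : relComp S (asymPart G) ⊆ asymPart G) :
    S ⊆ equipot G := fun _ hxy =>
  mem_equipot_iff.2 fun _ =>
    ⟨mem_indiff_of_relComp_asymPart_subset hS hPS hSP hxy,
      mem_indiff_of_relComp_asymPart_subset hS hPS hSP (hS _ _ hxy)⟩

end Relations

theorem comp_eq_asymPart_iff_subset_equipot_general (pre S : Set (X × X))
    (hpre : IsPreorderRel pre) (hS : IsEquivRel S) :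
    (relComp (asymPart pre) S = asymPart pre ∧
      relComp S (asymPart pre) = asymPart pre) ↔ S ⊆ equipot pre := by
  obtain ⟨hSrefl, hSsymm, -⟩ := hS
  constructor
  · rintro ⟨hPS, hSP⟩
    exact subset_equipot_of_relComp_asymPart_subset hSsymm hPS.subset hSP.subset
  · intro hSR
    exact ⟨(relComp_asymPart_left_subset hpre.2 hSR).antisymm (subset_relComp_right hSrefl _),
      (relComp_asymPart_right_subset hpre.2 hSR).antisymm (subset_relComp_left hSrefl _)⟩

theorem comp_eq_asymPart_iff_subset_equipot [Nonempty X] (pre S : Set (X × X))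
    (hpre : IsPreorderRel pre) (hS : IsEquivRel S) :
    (relComp (asymPart pre) S = asymPart pre ∧
      relComp S (asymPart pre) = asymPart pre) ↔ S ⊆ equipot pre :=
  comp_eq_asymPart_iff_subset_equipot_general pre S hpre hS
end

section
/- Let S be an equivalence relation on a nonempty set X and ≼ a partial order on X with asymmetric part P_≼. Then S ⊆ I_≼ (the indifference relation of ≼) if and only if the composition S ∘ P_≼ ∘ S is irreflexive, i.e., (x,x) ∉ S ∘ P_≼ ∘ S for all x ∈ X. -/
variable {X : Type*}

theorem subset_indiff_iff_disjoint_asymPart {G S : Set (X × X)}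
    (hS : ∀ x y, (x, y) ∈ S → (y, x) ∈ S) :
    S ⊆ indiff G ↔ Disjoint S (asymPart G) := by
  rw [Set.disjoint_left]
  exact ⟨fun h p hp => (h hp).1, fun h p hp => ⟨h hp, h (hS _ _ hp)⟩⟩

theorem irrefl_relComp_relComp_iff_disjoint {G S : Set (X × X)} (hS : IsEquivRel S) :
    (∀ x, (x, x) ∉ relComp S (relComp G S)) ↔ Disjoint S G := by
  obtain ⟨hrefl, hsymm, htrans⟩ := hS
  rw [Set.disjoint_left]
  constructor
  · rintro h ⟨a, b⟩ hab hG
    exact h a ⟨a, hrefl a, b, hG, hsymm _ _ hab⟩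
  · rintro h x ⟨a, hxa, b, hG, hbx⟩
    exact h (hsymm _ _ (htrans _ _ _ hbx hxa)) hG

theorem subset_indiff_iff_irrefl_comp_general (pr S : Set (X × X))
    (hS : IsEquivRel S) :
    S ⊆ indiff pr ↔ ∀ x : X, (x, x) ∉ relComp S (relComp (asymPart pr) S) := by
  rw [subset_indiff_iff_disjoint_asymPart hS.2.1, irrefl_relComp_relComp_iff_disjoint hS]

theorem subset_indiff_iff_irrefl_comp [Nonempty X] (pr S : Set (X × X))
    (hpr : IsPartialOrderRel pr) (hS : IsEquivRel S) :
    S ⊆ indiff pr ↔ ∀ x : X, (x, x) ∉ relComp S (relComp (asymPart pr) S) :=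
  subset_indiff_iff_irrefl_comp_general pr S hS
end

section
/- Let S be an equivalence relation on a nonempty set X and ≼ a partial order on X with asymmetric part P_≼. Then there exists a total preorder S-extension of ≼ if and only if the composition S ∘ P_≼ ∘ S is acyclic. -/
variable {X : Type*}

/-!
A total preorder `T` with symmetric part `S` absorbs `S` on both sides of its asymmetric part,
so `S ∘ P_≼ ∘ S ⊆ P_T`, and the transitive irreflexive relation `P_T` has no cycles.
Conversely, if `S ∘ P_≼ ∘ S` is acyclic, its transitive hull is a strict order that is invariant
under `S`, hence descends to a strict order on `X / S`; extending that to a linear order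
(Szpilrajn) and pulling it back to `X` gives a total preorder whose indifference classes are
exactly the `S`-classes.
-/

theorem Relation.ReflTransGen.exists_chain {r : X → X → Prop} {a b : X}
    (h : Relation.ReflTransGen r a b) :
    ∃ (n : ℕ) (x : Fin (n + 1) → X), x 0 = a ∧ x (Fin.last n) = b ∧
      ∀ i : Fin n, r (x i.castSucc) (x i.succ) := by
  induction h with
  | refl => exact ⟨0, fun _ => a, rfl, rfl, Fin.elim0⟩
  | @tail c d _ hcd ih =>
    obtain ⟨n, x, h0, hlast, hstep⟩ := ih
    refine ⟨n + 1, Fin.snoc x d, by simpa using h0, Fin.snoc_last .., fun i => ?_⟩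
    cases i using Fin.lastCases with
    | last => simpa [hlast] using hcd
    | cast j => simpa only [Fin.snoc_castSucc, Fin.succ_castSucc] using hstep j

theorem isAcyclicRel_iff_forall_not_mem_transHull {G : Set (X × X)} :
    IsAcyclicRel G ↔ ∀ x, (x, x) ∉ TransHull G := by
  constructor
  · intro hG x hx
    obtain ⟨c, hxc, hcx⟩ := Relation.TransGen.tail'_iff.mp hx
    obtain ⟨n, y, rfl, rfl, hstep⟩ := hxc.exists_chain
    exact hG n y hstep hcx
  · intro hG n x hstep hclose
    have hpath : ∀ i, Relation.ReflTransGen (fun a b => (a, b) ∈ G) (x 0) (x i) := by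
      intro i
      induction i using Fin.induction with
      | zero => exact .refl
      | succ j ih => exact ih.tail (hstep j)
    exact hG (x 0) (.tail' (hpath (Fin.last n)) hclose)

theorem IsPreorderRel.asymPart_trans {T : Set (X × X)} (hT : IsPreorderRel T) {a b c : X}
    (hab : (a, b) ∈ asymPart T) (hbc : (b, c) ∈ asymPart T) : (a, c) ∈ asymPart T :=
  ⟨hT.2 _ _ _ hab.1 hbc.1, fun hca => hab.2 (hT.2 _ _ _ hbc.1 hca)⟩

theorem IsPreorderRel.isAcyclicRel_of_subset_asymPart {T G : Set (X × X)} (hT : IsPreorderRel T)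
    (hG : G ⊆ asymPart T) : IsAcyclicRel G := by
  have : IsTrans X fun a b => (a, b) ∈ asymPart T := ⟨fun _ _ _ => hT.asymPart_trans⟩
  refine isAcyclicRel_iff_forall_not_mem_transHull.mpr fun x hx => ?_
  have hxx : (x, x) ∈ asymPart T :=
    Relation.transGen_minimal (r' := fun a b => (a, b) ∈ asymPart T) (fun _ _ h => hG h) _ _ hx
  exact hxx.2 hxx.1

theorem relComp_mono {A A' B B' : Set (X × X)} (hA : A ⊆ A') (hB : B ⊆ B') :
    relComp A B ⊆ relComp A' B' :=
  fun _ ⟨z, hz, hz'⟩ => ⟨z, hA hz, hB hz'⟩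

theorem IsPreorderRel.asymPart_of_symPart_left {T : Set (X × X)} (hT : IsPreorderRel T)
    {a b c : X} (hab : (a, b) ∈ symPart T) (hbc : (b, c) ∈ asymPart T) : (a, c) ∈ asymPart T :=
  ⟨hT.2 _ _ _ hab.1 hbc.1, fun hca => hbc.2 (hT.2 _ _ _ hca hab.1)⟩

theorem IsPreorderRel.asymPart_of_symPart_right {T : Set (X × X)} (hT : IsPreorderRel T)
    {a b c : X} (hab : (a, b) ∈ asymPart T) (hbc : (b, c) ∈ symPart T) : (a, c) ∈ asymPart T :=
  ⟨hT.2 _ _ _ hab.1 hbc.1, fun hca => hab.2 (hT.2 _ _ _ hbc.1 hca)⟩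

theorem IsPreorderRel.relComp_symPart_asymPart_subset {T : Set (X × X)} (hT : IsPreorderRel T) :
    relComp (symPart T) (relComp (asymPart T) (symPart T)) ⊆ asymPart T :=
  fun _ ⟨_, hab, _, hbc, hcd⟩ =>
    hT.asymPart_of_symPart_left hab (hT.asymPart_of_symPart_right hbc hcd)

theorem IsSExtension.isAcyclicRel {pr S T : Set (X × X)} (h : IsSExtension pr S T) :
    IsAcyclicRel (relComp S (relComp (asymPart pr) S)) := by
  obtain ⟨hT, -, hPT, rfl⟩ := h
  exact hT.isAcyclicRel_of_subset_asymPart <|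
    (relComp_mono subset_rfl (relComp_mono hPT subset_rfl)).trans hT.relComp_symPart_asymPart_subset

theorem exists_isLinearOrder_of_isStrictOrder {α : Type*} (r : α → α → Prop) [IsStrictOrder α r] :
    ∃ s : α → α → Prop, IsLinearOrder α s ∧ ∀ a b, r a b → s a b ∧ ¬ s b a := by
  let := partialOrderOfSO r
  obtain ⟨s, hs, hle⟩ := extend_partialOrder ((· ≤ ·) : α → α → Prop)
  refine ⟨s, hs, fun a b hab => ⟨hle _ _ (Or.inr hab), fun hba => ?_⟩⟩
  obtain rfl : a = b := antisymm_of s (hle _ _ (Or.inr hab)) hba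
  exact irrefl a hab

section Preimage

variable {α : Type*} (f : X → α) (s : α → α → Prop)

theorem isPreorderRel_preimage [IsPreorder α s] : IsPreorderRel {p : X × X | s (f p.1) (f p.2)} :=
  ⟨fun _ => refl_of s _, fun _ _ _ => trans_of s⟩

theorem isTotalRel_preimage [Std.Total s] : IsTotalRel {p : X × X | s (f p.1) (f p.2)} :=
  fun _ _ => total_of s _ _

theorem symPart_preimage [Std.Refl s] [Std.Antisymm s] :
    symPart {p : X × X | s (f p.1) (f p.2)} = {p | f p.1 = f p.2} := by
  ext ⟨a, b⟩
  refine ⟨fun h => antisymm_of s h.1 h.2, fun (h : f a = f b) => ?_⟩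
  exact ⟨show s (f a) (f b) from h ▸ refl_of s _, show s (f b) (f a) from h ▸ refl_of s _⟩

end Preimage

namespace IsEquivRel

variable {S A : Set (X × X)} (hS : IsEquivRel S)

def setoid : Setoid X :=
  ⟨fun a b => (a, b) ∈ S, ⟨hS.1, hS.2.1 _ _, hS.2.2 _ _ _⟩⟩

theorem setOf_mk_eq_mk : {p : X × X | (⟦p.1⟧ : Quotient hS.setoid) = ⟦p.2⟧} = S :=
  Set.ext fun _ => Quotient.eq

include hS in
theorem mem_transHull_sandwich {a b c d : X} (hab : (a, b) ∈ S)
    (hbc : (b, c) ∈ TransHull (relComp S (relComp A S))) (hcd : (c, d) ∈ S) :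
    (a, d) ∈ TransHull (relComp S (relComp A S)) := by
  obtain ⟨e, ⟨z, hez, w, hzw, hwc⟩, hec⟩ := Relation.TransGen.head'_iff.mp hbc
  have hac : Relation.TransGen _ a c := .head' ⟨z, hS.2.2 _ _ _ hab hez, w, hzw, hwc⟩ hec
  obtain ⟨e, hae, ⟨z, hez, w, hzw, hwc⟩⟩ := Relation.TransGen.tail'_iff.mp hac
  exact .tail' hae ⟨z, hez, w, hzw, hS.2.2 _ _ _ hwc hcd⟩

def quotientTransHull (A : Set (X × X)) : Quotient hS.setoid → Quotient hS.setoid → Prop :=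
  Quotient.lift₂ (fun a b => (a, b) ∈ TransHull (relComp S (relComp A S)))
    fun _ _ _ _ ha hb => propext
      ⟨fun h => hS.mem_transHull_sandwich (hS.2.1 _ _ ha) h hb,
        fun h => hS.mem_transHull_sandwich ha h (hS.2.1 _ _ hb)⟩

theorem isStrictOrder_quotientTransHull (h : IsAcyclicRel (relComp S (relComp A S))) :
    IsStrictOrder _ (hS.quotientTransHull A) where
  irrefl := Quotient.ind (isAcyclicRel_iff_forall_not_mem_transHull.mp h)
  trans := by
    rintro ⟨a⟩ ⟨b⟩ ⟨c⟩
    exact Relation.TransGen.trans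

include hS in
theorem exists_total_preorder_of_isAcyclicRel (h : IsAcyclicRel (relComp S (relComp A S))) :
    ∃ T, IsPreorderRel T ∧ IsTotalRel T ∧ A ⊆ asymPart T ∧ symPart T = S := by
  have := hS.isStrictOrder_quotientTransHull h
  obtain ⟨s, hs, hext⟩ := exists_isLinearOrder_of_isStrictOrder (hS.quotientTransHull A)
  refine ⟨{p | s ⟦p.1⟧ ⟦p.2⟧}, isPreorderRel_preimage _ s, isTotalRel_preimage _ s,
    fun p hp => hext _ _ (.single ⟨p.1, hS.1 _, p.2, hp, hS.1 _⟩),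
    (symPart_preimage _ s).trans hS.setOf_mk_eq_mk⟩

end IsEquivRel

theorem exists_S_extension_iff_acyclic_general (pr S : Set (X × X)) (hS : IsEquivRel S) :
    (∃ T : Set (X × X), IsSExtension pr S T) ↔
      IsAcyclicRel (relComp S (relComp (asymPart pr) S)) :=
  ⟨fun ⟨_, hT⟩ => hT.isAcyclicRel, hS.exists_total_preorder_of_isAcyclicRel⟩

theorem exists_S_extension_iff_acyclic [Nonempty X] (pr S : Set (X × X))
    (hpr : IsPartialOrderRel pr) (hS : IsEquivRel S) :
    (∃ T : Set (X × X), IsSExtension pr S T) ↔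
      IsAcyclicRel (relComp S (relComp (asymPart pr) S)) :=
  exists_S_extension_iff_acyclic_general pr S hS
end

section
/- Let ≼ be a partial order on a nonempty set X with asymmetric part P_≼ and S an equivalence relation on X. If the composition S ∘ P_≼ ∘ S is acyclic, then the intersection of all total preorder S-extensions of ≼ equals the preorder S ∪ TH(S ∘ P_≼ ∘ S), i.e., the preorder whose asymmetric part is the transitive hull of S ∘ P_≼ ∘ S and whose symmetric part coincides with S. -/
/-!
Write `Q = S ∘ P_≼ ∘ S`. Every total preorder `S`-extension `≾` contains `S = S_≾`, and `Q ⊆ P_≾`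
because `P_≾` absorbs `S_≾` on both sides; as `P_≾` is transitive, `TH(Q) ⊆ P_≾`.

Conversely, `Q` absorbs `S` on both sides, and acyclicity makes `TH(Q)` irreflexive, so
`R = S ∪ TH(Q)` is a preorder with symmetric part `S` whose asymmetric part contains `P_≼`.
A preorder is the intersection of its total extensions with the same symmetric part: if
`(x, y) ∉ R`, adjoin the pair `(y, x)` (this does not change the symmetric part), pass to the
quotient by the symmetric part and extend the resulting partial order linearly (Szpilrajn).
-/

variable {X : Type*}

def IsTransRel (G : Set (X × X)) : Prop :=
  ∀ x y z, (x, y) ∈ G → (y, z) ∈ G → (x, z) ∈ G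

def IsSaturated (S W : Set (X × X)) : Prop :=
  relComp S W ⊆ W ∧ relComp W S ⊆ W

/-- The smallest preorder containing the preorder `R` and the pair `(y, x)`. -/
def adjoinPair (R : Set (X × X)) (y x : X) : Set (X × X) :=
  R ∪ {p | (p.1, y) ∈ R ∧ (x, p.2) ∈ R}

lemma exists_chain_of_transGen {r : X → X → Prop} {a b : X} (h : Relation.TransGen r a b) :
    ∃ (n : ℕ) (x : Fin (n + 1) → X), x 0 = a ∧ (∀ i : Fin n, r (x i.castSucc) (x i.succ)) ∧
      r (x (Fin.last n)) b := by
  induction h with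
  | single hab => exact ⟨0, fun _ => a, rfl, fun i => i.elim0, hab⟩
  | @tail b c _ hbc ih =>
    obtain ⟨n, x, hx0, hchain, hlast⟩ := ih
    refine ⟨n + 1, Fin.snoc x b, by simpa using hx0, fun i => ?_, by simpa using hbc⟩
    refine Fin.lastCases ?_ (fun j => ?_) i
    · simpa using hlast
    · rw [Fin.succ_castSucc, Fin.snoc_castSucc, Fin.snoc_castSucc]; exact hchain j

lemma IsAcyclicRel.not_mem_transHull_self {G : Set (X × X)} (h : IsAcyclicRel G) (a : X) :
    (a, a) ∉ TransHull G := fun ha => by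
  obtain ⟨n, x, hx0, hchain, hlast⟩ := exists_chain_of_transGen ha
  exact h n x hchain (hx0 ▸ hlast)

lemma isTransRel_transHull (G : Set (X × X)) : IsTransRel (TransHull G) :=
  fun _ _ _ => Relation.TransGen.trans

lemma subset_transHull (G : Set (X × X)) : G ⊆ TransHull G :=
  fun _ h => Relation.TransGen.single h

lemma transHull_subset {G H : Set (X × X)} (hGH : G ⊆ H) (hH : IsTransRel H) :
    TransHull G ⊆ H := by
  rintro ⟨a, b⟩ (h : Relation.TransGen _ a b)
  induction h with
  | single h => exact hGH h
  | tail _ hbc ih => exact hH _ _ _ ih (hGH hbc)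

section Saturation

variable {S W : Set (X × X)}

lemma IsEquivRel.isSaturated_relComp (hS : IsEquivRel S) (A : Set (X × X)) :
    IsSaturated S (relComp S (relComp A S)) :=
  ⟨fun _ ⟨_, hab, _, hbc, c, hcd, hde⟩ => ⟨_, hS.2.2 _ _ _ hab hbc, c, hcd, hde⟩,
    fun _ ⟨_, ⟨b, hab, c, hbc, hcd⟩, hde⟩ => ⟨b, hab, c, hbc, hS.2.2 _ _ _ hcd hde⟩⟩

lemma IsEquivRel.subset_relComp (hS : IsEquivRel S) (A : Set (X × X)) :
    A ⊆ relComp S (relComp A S) :=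
  fun p hp => ⟨p.1, hS.1 _, p.2, hp, hS.1 _⟩

lemma IsSaturated.transHull (h : IsSaturated S W) : IsSaturated S (TransHull W) := by
  constructor
  · rintro ⟨a, c⟩ ⟨b, hab, hbc : Relation.TransGen _ b c⟩
    induction hbc with
    | single hbc => exact subset_transHull W (h.1 ⟨b, hab, hbc⟩)
    | tail _ hcd ih => exact Relation.TransGen.tail (ih hab) hcd
  · rintro ⟨a, c⟩ ⟨b, hab : Relation.TransGen _ a b, hbc⟩
    induction hab generalizing c with
    | single hab => exact subset_transHull W (h.2 ⟨_, hab, hbc⟩)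
    | tail hab hbd _ => exact Relation.TransGen.tail hab (h.2 ⟨_, hbd, hbc⟩)

variable (hS : IsEquivRel S) (hW : IsTransRel W) (hsat : IsSaturated S W)
include hS hW hsat

lemma isPreorderRel_union_s11 : IsPreorderRel (S ∪ W) := by
  refine ⟨fun a => Or.inl (hS.1 a), ?_⟩
  rintro a b c (hab | hab) (hbc | hbc)
  · exact Or.inl (hS.2.2 _ _ _ hab hbc)
  · exact Or.inr (hsat.1 ⟨b, hab, hbc⟩)
  · exact Or.inr (hsat.2 ⟨b, hab, hbc⟩)
  · exact Or.inr (hW _ _ _ hab hbc)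

omit hS in
lemma subset_asymPart_union_s11 (hirr : ∀ a, (a, a) ∉ W) : W ⊆ asymPart (S ∪ W) := by
  rintro ⟨a, b⟩ hab
  refine ⟨Or.inr hab, ?_⟩
  rintro (hba | hba)
  · exact hirr a (hsat.2 ⟨b, hab, hba⟩)
  · exact hirr a (hW _ _ _ hab hba)

lemma symPart_union_s11 (hirr : ∀ a, (a, a) ∉ W) : symPart (S ∪ W) = S := by
  ext ⟨a, b⟩
  refine ⟨fun ⟨hab, hba⟩ => ?_, fun hab => ⟨Or.inl hab, Or.inl (hS.2.1 _ _ hab)⟩⟩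
  refine hab.resolve_right fun habW => ?_
  exact (subset_asymPart_union_s11 hW hsat hirr habW).2 hba

end Saturation

section TotalExtension

variable {R : Set (X × X)}

lemma asymPart_subset_asymPart {T : Set (X × X)} (hRT : R ⊆ T)
    (hsym : symPart T ⊆ symPart R) : asymPart R ⊆ asymPart T :=
  fun _ ⟨hR, hnR⟩ => ⟨hRT hR, fun hT => hnR (hsym ⟨hRT hR, hT⟩).2⟩

lemma IsPreorderRel.isTransRel_asymPart (hR : IsPreorderRel R) : IsTransRel (asymPart R) :=
  fun _ _ _ ⟨hab, _⟩ ⟨hbc, hcb⟩ => ⟨hR.2 _ _ _ hab hbc, fun hca => hcb (hR.2 _ _ _ hca hab)⟩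

lemma IsPreorderRel.relComp_symPart_asymPart_subset_s11 (hR : IsPreorderRel R) :
    relComp (symPart R) (relComp (asymPart R) (symPart R)) ⊆ asymPart R :=
  fun _ ⟨_, ⟨hab, _⟩, _, ⟨hbc, hcb⟩, hcd, _⟩ =>
    ⟨hR.2 _ _ _ hab (hR.2 _ _ _ hbc hcd),
      fun hda => hcb (hR.2 _ _ _ hcd (hR.2 _ _ _ hda hab))⟩

lemma IsPreorderRel.exists_total_superset (hR : IsPreorderRel R) :
    ∃ T, IsPreorderRel T ∧ IsTotalRel T ∧ R ⊆ T ∧ symPart T = symPart R := by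
  let s : Setoid X := ⟨fun a b => (a, b) ∈ symPart R,
    ⟨fun a => ⟨hR.1 a, hR.1 a⟩, fun h => ⟨h.2, h.1⟩,
      fun h h' => ⟨hR.2 _ _ _ h.1 h'.1, hR.2 _ _ _ h'.2 h.2⟩⟩⟩
  let r : Quotient s → Quotient s → Prop := Quotient.lift₂ (fun a b => (a, b) ∈ R)
    fun a b a' b' haa' hbb' => propext
      ⟨fun h => hR.2 _ _ _ haa'.2 (hR.2 _ _ _ h hbb'.1),
        fun h => hR.2 _ _ _ haa'.1 (hR.2 _ _ _ h hbb'.2)⟩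
  have : IsPartialOrder (Quotient s) r :=
    { refl := Quotient.ind hR.1
      trans := Quotient.ind fun a => Quotient.ind₂ fun b c => hR.2 a b c
      antisymm := Quotient.ind₂ fun a b hab hba => Quotient.sound ⟨hab, hba⟩ }
  obtain ⟨lin, _, hr⟩ := extend_partialOrder r
  refine ⟨{p | lin ⟦p.1⟧ ⟦p.2⟧}, ⟨fun a => refl_of lin _, fun a b c => _root_.trans⟩,
    fun a b => total_of lin _ _, fun p hp => hr _ _ hp, ?_⟩
  ext ⟨a, b⟩
  refine ⟨fun ⟨hab, hba⟩ => Quotient.exact (antisymm hab hba), fun hab => ?_⟩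
  have hq : (⟦a⟧ : Quotient s) = ⟦b⟧ := Quotient.sound hab
  exact ⟨show lin ⟦a⟧ ⟦b⟧ from hq ▸ refl_of lin _, show lin ⟦b⟧ ⟦a⟧ from hq ▸ refl_of lin _⟩

variable {x y : X}

lemma subset_adjoinPair : R ⊆ adjoinPair R y x := Set.subset_union_left

lemma IsPreorderRel.mem_adjoinPair (hR : IsPreorderRel R) : (y, x) ∈ adjoinPair R y x :=
  Or.inr ⟨hR.1 y, hR.1 x⟩

lemma isPreorderRel_adjoinPair (hR : IsPreorderRel R) : IsPreorderRel (adjoinPair R y x) := by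
  refine ⟨fun a => Or.inl (hR.1 a), ?_⟩
  rintro a b c (hab | ⟨hay, hxb⟩) (hbc | ⟨hby, hxc⟩)
  · exact Or.inl (hR.2 _ _ _ hab hbc)
  · exact Or.inr ⟨hR.2 _ _ _ hab hby, hxc⟩
  · exact Or.inr ⟨hay, hR.2 _ _ _ hxb hbc⟩
  · exact Or.inr ⟨hay, hxc⟩

lemma IsPreorderRel.symPart_adjoinPair (hR : IsPreorderRel R) (hxy : (x, y) ∉ R) :
    symPart (adjoinPair R y x) = symPart R := by
  have htr := hR.2
  ext ⟨a, b⟩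
  refine ⟨?_, fun ⟨hab, hba⟩ => ⟨Or.inl hab, Or.inl hba⟩⟩
  rintro ⟨hab | ⟨hay, hxb⟩, hba | ⟨hby, hxa⟩⟩
  · exact ⟨hab, hba⟩
  · exact absurd (htr _ _ _ hxa (htr _ _ _ hab hby)) hxy
  · exact absurd (htr _ _ _ hxb (htr _ _ _ hba hay)) hxy
  · exact absurd (htr _ _ _ hxa hay) hxy

lemma IsPreorderRel.exists_total_superset_not_mem (hR : IsPreorderRel R) (hxy : (x, y) ∉ R) :
    ∃ T, IsPreorderRel T ∧ IsTotalRel T ∧ R ⊆ T ∧ symPart T = symPart R ∧ (x, y) ∉ T := by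
  obtain ⟨T, hT, htot, hsub, hsym⟩ :=
    (isPreorderRel_adjoinPair (x := x) (y := y) hR).exists_total_superset
  rw [hR.symPart_adjoinPair hxy] at hsym
  refine ⟨T, hT, htot, subset_adjoinPair.trans hsub, hsym, fun hxyT => hxy ?_⟩
  exact (hsym ▸ ⟨hxyT, hsub hR.mem_adjoinPair⟩ : (x, y) ∈ symPart R).1

end TotalExtension

lemma IsSExtension.transHull_subset_asymPart {pr S T : Set (X × X)} (hT : IsSExtension pr S T) :
    TransHull (relComp S (relComp (asymPart pr) S)) ⊆ asymPart T := by
  obtain ⟨hpre, -, hP, rfl⟩ := hT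
  refine transHull_subset (fun p ⟨a, hpa, b, hab, hbp⟩ => ?_) hpre.isTransRel_asymPart
  exact hpre.relComp_symPart_asymPart_subset_s11 ⟨a, hpa, b, hP hab, hbp⟩

theorem sInter_S_extensions_eq_of_acyclic_general (pr S : Set (X × X))
    (hS : IsEquivRel S)
    (hacyc : IsAcyclicRel (relComp S (relComp (asymPart pr) S))) :
    ⋂₀ {T : Set (X × X) | IsSExtension pr S T} =
      S ∪ TransHull (relComp S (relComp (asymPart pr) S)) := by
  set Q := relComp S (relComp (asymPart pr) S)
  have htr := isTransRel_transHull Q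
  have hsat := (hS.isSaturated_relComp (asymPart pr)).transHull
  have hR := isPreorderRel_union_s11 hS htr hsat
  have hirr := hacyc.not_mem_transHull_self
  have hsym := symPart_union_s11 hS htr hsat hirr
  refine Set.Subset.antisymm (fun ⟨x, y⟩ hxy => ?_) ?_
  · by_contra hxyR
    obtain ⟨T, hT, htot, hRT, hsymT, hxyT⟩ := hR.exists_total_superset_not_mem hxyR
    refine hxyT (hxy T ⟨hT, htot, ?_, hsymT.trans hsym⟩)
    calc asymPart pr ⊆ TransHull Q := (hS.subset_relComp _).trans (subset_transHull Q)
      _ ⊆ asymPart (S ∪ TransHull Q) := subset_asymPart_union_s11 htr hsat hirr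
      _ ⊆ asymPart T := asymPart_subset_asymPart hRT hsymT.le
  · rintro p hp T hT
    rcases hp with hpS | hpQ
    · exact (hT.2.2.2 ▸ hpS : p ∈ symPart T).1
    · exact (hT.transHull_subset_asymPart hpQ).1

theorem sInter_S_extensions_eq_of_acyclic [Nonempty X] (pr S : Set (X × X))
    (hpr : IsPartialOrderRel pr) (hS : IsEquivRel S)
    (hacyc : IsAcyclicRel (relComp S (relComp (asymPart pr) S))) :
    ⋂₀ {T : Set (X × X) | IsSExtension pr S T} =
      S ∪ TransHull (relComp S (relComp (asymPart pr) S)) :=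
  sInter_S_extensions_eq_of_acyclic_general pr S hS hacyc
end

section
/- Let S be an equivalence relation on a nonempty set X and ≼ a partial order on X with asymmetric part P_≼. Then ≼ has a unique total preorder S-extension if and only if S is maximal with respect to inclusion in the collection Σ*(≼) and the transitive hull TH(S ∘ P_≼ ∘ S) is negatively transitive. -/
variable {X : Type*}

/-!
Write `W` for the transitive hull of `S ∘ P_≼ ∘ S`. Call a strict order `V` *admissible* for `S`
if `S ∘ V ∘ S ⊆ V` and `P_≼ ⊆ V`; then `S ∈ Σ*(≼)` exactly when some admissible strict order
exists, and `W` is the least one. By Szpilrajn's theorem on the quotient `X / S`, every admissible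
`V` lies in the asymmetric part of some total preorder `S`-extension, and a pair `a, b` that is
neither `S`-related nor `V`-comparable can be ordered either way by such an extension. So the
extension is unique iff no such pair exists for any admissible `V`. For `V = W` this is negative
transitivity of `W` together with `S` being the `W`-indifference relation; for `V = W'` built from
a larger `S' ∈ Σ*(≼)` it is maximality of `S`. Conversely, when every pair outside `S` is
`W`-comparable, each extension `T` is forced to be `S ∪ W`.
-/

section Relations

variable {V G : Set (X × X)}

structure IsStrictOrderRel (V : Set (X × X)) : Prop where
  irrefl : ∀ x, (x, x) ∉ V
  trans : ∀ x y z, (x, y) ∈ V → (y, z) ∈ V → (x, z) ∈ V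

theorem IsPreorderRel.isStrictOrderRel_asymPart {T : Set (X × X)} (hT : IsPreorderRel T) :
    IsStrictOrderRel (asymPart T) where
  irrefl _ h := h.2 h.1
  trans _ _ _ hxy hyz :=
    ⟨hT.2 _ _ _ hxy.1 hyz.1, fun hzx => hyz.2 (hT.2 _ _ _ hzx hxy.1)⟩

theorem IsPreorderRel.isEquivRel_symPart {T : Set (X × X)} (hT : IsPreorderRel T) :
    IsEquivRel (symPart T) :=
  ⟨fun x => ⟨hT.1 x, hT.1 x⟩, fun _ _ h => ⟨h.2, h.1⟩,
    fun _ _ _ hxy hyz => ⟨hT.2 _ _ _ hxy.1 hyz.1, hT.2 _ _ _ hyz.2 hxy.2⟩⟩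

theorem IsStrictOrderRel.mem_indiff_iff (hV : IsStrictOrderRel V) {p : X × X} :
    p ∈ indiff V ↔ p ∉ V ∧ (p.2, p.1) ∉ V := by
  have hasym : asymPart V = V :=
    Set.ext fun q => ⟨And.left, fun hq => ⟨hq, fun h => hV.irrefl _ (hV.trans _ _ _ hq h)⟩⟩
  simp only [indiff, hasym, Set.mem_ofPred_eq]

theorem IsStrictOrderRel.isAcyclicRel_of_subset (hV : IsStrictOrderRel V) (hGV : G ⊆ V) :
    IsAcyclicRel G := by
  intro n x hchain hclose
  have hpath : ∀ i : Fin (n + 1), i = 0 ∨ (x 0, x i) ∈ V := by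
    intro i
    induction i using Fin.induction with
    | zero => exact Or.inl rfl
    | succ j ih =>
      right
      rcases ih with hj | hj
      · simpa [hj] using hGV (hchain j)
      · exact hV.trans _ _ _ hj (hGV (hchain j))
  rcases hpath (Fin.last n) with hn | hn
  · exact hV.irrefl _ (hGV (hn ▸ hclose))
  · exact hV.irrefl _ (hV.trans _ _ _ hn (hGV hclose))

theorem exists_chain_of_reflTransGen {a c : X}
    (h : Relation.ReflTransGen (fun u v => (u, v) ∈ G) a c) :
    ∃ (n : ℕ) (x : Fin (n + 1) → X), x 0 = a ∧ x (Fin.last n) = c ∧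
      ∀ i : Fin n, (x i.castSucc, x i.succ) ∈ G := by
  induction h with
  | refl => exact ⟨0, fun _ => a, rfl, rfl, fun i => i.elim0⟩
  | @tail b c _ hbc ih =>
    obtain ⟨n, x, hx0, hxn, hchain⟩ := ih
    refine ⟨n + 1, Fin.snoc x c, by simpa using hx0, by simp, fun i => ?_⟩
    induction i using Fin.lastCases with
    | last => simpa [hxn] using hbc
    | cast j =>
      rw [Fin.succ_castSucc, Fin.snoc_castSucc, Fin.snoc_castSucc]
      exact hchain j

theorem IsAcyclicRel.isStrictOrderRel_transHull (hG : IsAcyclicRel G) :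
    IsStrictOrderRel (TransHull G) where
  irrefl x hx := by
    obtain ⟨c, hxc, hcx⟩ := Relation.TransGen.tail'_iff.mp hx
    obtain ⟨n, y, hy0, hyn, hchain⟩ := exists_chain_of_reflTransGen hxc
    exact hG n y hchain (by rwa [hyn, hy0])
  trans _ _ _ := Relation.TransGen.trans

theorem transHull_subset_s12 (hV : IsStrictOrderRel V) (hGV : G ⊆ V) : TransHull G ⊆ V := by
  rintro ⟨a, b⟩ (hab : Relation.TransGen _ a b)
  induction hab with
  | single h => exact hGV h
  | tail _ h ih => exact hV.trans _ _ _ ih (hGV h)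

end Relations

section Admissible

variable {pr S S' V G T : Set (X × X)}

def IsCompatibleRel (S V : Set (X × X)) : Prop :=
  ∀ u x y v, (u, x) ∈ S → (x, y) ∈ V → (y, v) ∈ S → (u, v) ∈ V

theorem isCompatibleRel_relComp (hS : ∀ x y z, (x, y) ∈ S → (y, z) ∈ S → (x, z) ∈ S) :
    IsCompatibleRel S (relComp S (relComp G S)) := by
  rintro u x y v hux ⟨w, hxw, z, hwz, hzy⟩ hyv
  exact ⟨w, hS _ _ _ hux hxw, z, hwz, hS _ _ _ hzy hyv⟩

theorem IsCompatibleRel.transHull (hS : ∀ x, (x, x) ∈ S) (hG : IsCompatibleRel S G) :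
    IsCompatibleRel S (TransHull G) := by
  intro u x y v hux (hxy : Relation.TransGen _ x y) hyv
  have hleft : ∀ z, Relation.TransGen (fun a b => (a, b) ∈ G) x z →
      Relation.TransGen (fun a b => (a, b) ∈ G) u z := by
    intro z hxz
    induction hxz with
    | single h => exact .single (hG _ _ _ _ hux h (hS _))
    | tail _ h ih => exact ih.tail h
  obtain ⟨w, huw, hwy⟩ := Relation.TransGen.tail'_iff.mp (hleft y hxy)
  exact Relation.TransGen.tail' huw (hG _ _ _ _ (hS w) hwy hyv)

theorem IsCompatibleRel.notMem_of_mem (hS : IsEquivRel S) (hV : IsStrictOrderRel V)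
    (hc : IsCompatibleRel S V) ⦃a b : X⦄ (hab : (a, b) ∈ S) : (a, b) ∉ V :=
  fun h => hV.irrefl a (hc _ _ _ _ (hS.1 a) h (hS.2.1 _ _ hab))

theorem IsCompatibleRel.isPreorderRel_union (hS : IsEquivRel S) (hV : IsStrictOrderRel V)
    (hc : IsCompatibleRel S V) : IsPreorderRel (S ∪ V) := by
  refine ⟨fun x => Or.inl (hS.1 x), ?_⟩
  rintro x y z (hxy | hxy) (hyz | hyz)
  · exact Or.inl (hS.2.2 _ _ _ hxy hyz)
  · exact Or.inr (hc _ _ _ _ hxy hyz (hS.1 z))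
  · exact Or.inr (hc _ _ _ _ (hS.1 x) hxy hyz)
  · exact Or.inr (hV.trans _ _ _ hxy hyz)

theorem IsCompatibleRel.mem_of_mem_union (hS : IsEquivRel S) (hV : IsStrictOrderRel V)
    (hc : IsCompatibleRel S V) {a b : X} (hab : (a, b) ∈ S ∪ V) (hba : (b, a) ∈ S ∪ V) :
    (a, b) ∈ S := by
  rcases hab with hab | hab
  · exact hab
  · rcases hba with hba | hba
    · exact absurd hab (hc.notMem_of_mem hS hV (hS.2.1 _ _ hba))
    · exact absurd (hV.trans _ _ _ hab hba) (hV.irrefl a)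

structure IsAdmissibleRel (pr S V : Set (X × X)) : Prop extends IsStrictOrderRel V where
  compat : IsCompatibleRel S V
  asymPart_subset : asymPart pr ⊆ V

theorem IsAdmissibleRel.mono (hV : IsAdmissibleRel pr S' V) (hSS' : S ⊆ S') :
    IsAdmissibleRel pr S V :=
  { hV with compat := fun _ _ _ _ hux hxy hyv => hV.compat _ _ _ _ (hSS' hux) hxy (hSS' hyv) }

theorem IsAdmissibleRel.relComp_subset (hV : IsAdmissibleRel pr S V) :
    relComp S (relComp (asymPart pr) S) ⊆ V := by
  rintro ⟨x, y⟩ ⟨u, hxu, v, huv, hvy⟩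
  exact hV.compat _ _ _ _ hxu (hV.asymPart_subset huv) hvy

theorem IsAdmissibleRel.mem_sigmaStar (hS : IsEquivRel S) (hV : IsAdmissibleRel pr S V) :
    S ∈ SigmaStar pr :=
  ⟨hS, hV.isAcyclicRel_of_subset hV.relComp_subset⟩

theorem IsAdmissibleRel.transHull_subset (hV : IsAdmissibleRel pr S V) :
    TransHull (relComp S (relComp (asymPart pr) S)) ⊆ V :=
  _root_.transHull_subset_s12 hV.toIsStrictOrderRel hV.relComp_subset

theorem isAdmissibleRel_transHull_of_mem_sigmaStar (hS : S ∈ SigmaStar pr) :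
    IsAdmissibleRel pr S (TransHull (relComp S (relComp (asymPart pr) S))) :=
  { hS.2.isStrictOrderRel_transHull with
    compat := (isCompatibleRel_relComp hS.1.2.2).transHull hS.1.1
    asymPart_subset := fun p hp => .single ⟨p.1, hS.1.1 _, p.2, hp, hS.1.1 _⟩ }

def IsEquivRel.setoid_s12 (hS : IsEquivRel S) : Setoid X :=
  ⟨fun x y => (x, y) ∈ S, ⟨hS.1, hS.2.1 _ _, hS.2.2 _ _ _⟩⟩

/-- Szpilrajn's theorem applied to the partial order that `S ∪ V` induces on `X / S`. -/
theorem exists_sExtension_of_isAdmissibleRel (hS : IsEquivRel S)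
    (hV : IsAdmissibleRel pr S V) : ∃ T, IsSExtension pr S T ∧ V ⊆ asymPart T := by
  let _ : Setoid X := hS.setoid_s12
  have hR := hV.compat.isPreorderRel_union hS hV.toIsStrictOrderRel
  have hwd : ∀ a₁ b₁ a₂ b₂ : X, a₁ ≈ a₂ → b₁ ≈ b₂ →
      ((a₁, b₁) ∈ S ∪ V) = ((a₂, b₂) ∈ S ∪ V) := fun _ _ _ _ ha hb =>
    propext ⟨fun h => hR.2 _ _ _ (hR.2 _ _ _ (Or.inl (hS.2.1 _ _ ha)) h) (Or.inl hb),
      fun h => hR.2 _ _ _ (hR.2 _ _ _ (Or.inl ha) h) (Or.inl (hS.2.1 _ _ hb))⟩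
  let r : Quotient hS.setoid_s12 → Quotient hS.setoid_s12 → Prop :=
    fun p q => Quotient.liftOn₂ p q (fun a b => (a, b) ∈ S ∪ V) hwd
  have : IsPartialOrder _ r :=
    { refl := Quotient.ind hR.1
      trans := Quotient.ind fun _ => Quotient.ind fun _ => Quotient.ind fun _ => hR.2 _ _ _
      antisymm := Quotient.ind fun _ => Quotient.ind fun _ hab hba =>
        Quotient.sound (hV.compat.mem_of_mem_union hS hV.toIsStrictOrderRel hab hba) }
  obtain ⟨L, hL, hrL⟩ := extend_partialOrder r
  have hSL : ∀ a b, (a, b) ∈ S → L ⟦a⟧ ⟦b⟧ := fun a b h => hrL _ _ (Or.inl h)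
  have hVT : V ⊆ asymPart {p | L ⟦p.1⟧ ⟦p.2⟧} := fun p hp =>
    ⟨hrL _ _ (Or.inr hp), fun h => hV.compat.notMem_of_mem hS hV.toIsStrictOrderRel
      (Quotient.exact (antisymm (hrL _ _ (Or.inr hp)) h)) hp⟩
  refine ⟨_, ⟨⟨fun _ => refl _, fun _ _ _ => trans_of L⟩, fun _ _ => total_of L _ _,
    hV.asymPart_subset.trans hVT, ?_⟩, hVT⟩
  ext ⟨a, b⟩
  exact ⟨fun h => Quotient.exact (antisymm h.1 h.2),
    fun h => ⟨hSL _ _ h, hSL _ _ (hS.2.1 _ _ h)⟩⟩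

/-- The pair `(a, b)` is forced into the extension by adding all `(x, y)` with `x ≤ a` and
`b ≤ y` in the preorder `S ∪ V`. -/
theorem exists_sExtension_mem_asymPart (hS : IsEquivRel S) (hV : IsAdmissibleRel pr S V)
    {a b : X} (hba : (b, a) ∉ V) (habS : (a, b) ∉ S) :
    ∃ T, IsSExtension pr S T ∧ (a, b) ∈ asymPart T := by
  have hR := hV.compat.isPreorderRel_union hS hV.toIsStrictOrderRel
  have hbaR : (b, a) ∉ S ∪ V := by
    rintro (h | h)
    · exact habS (hS.2.1 _ _ h)
    · exact hba h
  let F : Set (X × X) := {p | (p.1, a) ∈ S ∪ V ∧ (b, p.2) ∈ S ∪ V}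
  have hVF : IsAdmissibleRel pr S (V ∪ F) :=
    { irrefl := by
        rintro x (h | ⟨hxa, hbx⟩)
        · exact hV.irrefl x h
        · exact hbaR (hR.2 _ _ _ hbx hxa)
      trans := by
        rintro x y z (hxy | ⟨hxa, hby⟩) (hyz | ⟨hya, hbz⟩)
        · exact Or.inl (hV.trans _ _ _ hxy hyz)
        · exact Or.inr ⟨hR.2 _ _ _ (Or.inr hxy) hya, hbz⟩
        · exact Or.inr ⟨hxa, hR.2 _ _ _ hby (Or.inr hyz)⟩
        · exact absurd (hR.2 _ _ _ hby hya) hbaR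
      compat := by
        rintro u x y v hux (hxy | ⟨hxa, hby⟩) hyv
        · exact Or.inl (hV.compat _ _ _ _ hux hxy hyv)
        · exact Or.inr ⟨hR.2 _ _ _ (Or.inl hux) hxa, hR.2 _ _ _ hby (Or.inl hyv)⟩
      asymPart_subset := hV.asymPart_subset.trans Set.subset_union_left }
  obtain ⟨T, hT, hVFT⟩ := exists_sExtension_of_isAdmissibleRel hS hVF
  exact ⟨T, hT, hVFT (Or.inr ⟨hR.1 a, hR.1 b⟩)⟩

theorem IsSExtension.isEquivRel (hT : IsSExtension pr S T) : IsEquivRel S :=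
  hT.2.2.2 ▸ hT.1.isEquivRel_symPart

theorem IsSExtension.isAdmissibleRel_asymPart (hT : IsSExtension pr S T) :
    IsAdmissibleRel pr S (asymPart T) := by
  obtain ⟨hpre, -, hasym, hsym⟩ := hT
  subst hsym
  refine { hpre.isStrictOrderRel_asymPart with compat := ?_, asymPart_subset := hasym }
  rintro u x y v hux hxy hyv
  exact ⟨hpre.2 _ _ _ hux.1 (hpre.2 _ _ _ hxy.1 hyv.1),
    fun hvu => hxy.2 (hpre.2 _ _ _ hyv.1 (hpre.2 _ _ _ hvu hux.1))⟩

theorem IsSExtension.eq_union (hT : IsSExtension pr S T) (hVT : V ⊆ asymPart T)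
    (hcomp : ∀ a b, (a, b) ∉ S → (a, b) ∈ V ∨ (b, a) ∈ V) : T = S ∪ V := by
  have hsym := hT.2.2.2
  ext ⟨a, b⟩
  constructor
  · intro hab
    by_cases habS : (a, b) ∈ S
    · exact Or.inl habS
    · exact Or.inr ((hcomp a b habS).resolve_right fun hba => (hVT hba).2 hab)
  · rintro (h | h)
    · exact (hsym ▸ h).1
    · exact (hVT h).1

theorem comparable_of_existsUnique_sExtension (hu : ∃! T, IsSExtension pr S T)
    (hV : IsAdmissibleRel pr S V) {a b : X} (habS : (a, b) ∉ S) :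
    (a, b) ∈ V ∨ (b, a) ∈ V := by
  obtain ⟨T, hT⟩ := hu.exists
  have hS := hT.isEquivRel
  by_contra! h
  obtain ⟨T₁, hT₁, habT₁⟩ := exists_sExtension_mem_asymPart hS hV h.2 habS
  obtain ⟨T₂, hT₂, hbaT₂⟩ :=
    exists_sExtension_mem_asymPart hS hV h.1 fun hba => habS (hS.2.1 _ _ hba)
  exact hbaT₂.2 (hu.unique hT₁ hT₂ ▸ habT₁.1)

theorem mem_sigmaStar_of_existsUnique_sExtension (hu : ∃! T, IsSExtension pr S T) :
    S ∈ SigmaStar pr :=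
  let ⟨_, hT⟩ := hu.exists
  hT.isAdmissibleRel_asymPart.mem_sigmaStar hT.isEquivRel

theorem eq_of_existsUnique_sExtension (hu : ∃! T, IsSExtension pr S T)
    (hS' : S' ∈ SigmaStar pr) (hSS' : S ⊆ S') : S' = S := by
  have hW' := isAdmissibleRel_transHull_of_mem_sigmaStar hS'
  refine Set.Subset.antisymm ?_ hSS'
  rintro ⟨a, b⟩ hab
  by_contra habS
  have hnot := hW'.compat.notMem_of_mem hS'.1 hW'.toIsStrictOrderRel
  rcases comparable_of_existsUnique_sExtension hu (hW'.mono hSS') habS with h | h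
  · exact hnot hab h
  · exact hnot (hS'.1.2.1 _ _ hab) h

theorem isNegTransRel_of_existsUnique_sExtension (hu : ∃! T, IsSExtension pr S T) :
    IsNegTransRel (TransHull (relComp S (relComp (asymPart pr) S))) := by
  have hS := mem_sigmaStar_of_existsUnique_sExtension hu
  have hW := isAdmissibleRel_transHull_of_mem_sigmaStar hS
  intro x y z hxy hyz hxz
  have hxyS : (x, y) ∉ S := fun h => hyz (hW.compat _ _ _ _ (hS.1.2.1 _ _ h) hxz (hS.1.1 z))
  rcases comparable_of_existsUnique_sExtension hu hW hxyS with h | h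
  · exact hxy h
  · exact hyz (hW.trans _ _ _ h hxz)

theorem IsNegTransRel.isEquivRel_indiff (hn : IsNegTransRel V) (hV : IsStrictOrderRel V) :
    IsEquivRel (indiff V) := by
  simp only [IsEquivRel, hV.mem_indiff_iff]
  exact ⟨fun x => ⟨hV.irrefl x, hV.irrefl x⟩, fun _ _ h => h.symm,
    fun x y z hxy hyz => ⟨hn x y z hxy.1 hyz.1, hn z y x hyz.2 hxy.2⟩⟩

theorem IsNegTransRel.isCompatibleRel_indiff (hn : IsNegTransRel V) (hV : IsStrictOrderRel V) :
    IsCompatibleRel (indiff V) V := by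
  intro u x y v hux hxy hyv
  rw [hV.mem_indiff_iff] at hux hyv
  by_contra huv
  exact hn x v y (hn x u v hux.2 huv) hyv.2 hxy

theorem existsUnique_sExtension_of_maximal (hS : S ∈ SigmaStar pr)
    (hmax : ∀ S' ∈ SigmaStar pr, S ⊆ S' → S' = S)
    (hn : IsNegTransRel (TransHull (relComp S (relComp (asymPart pr) S)))) :
    ∃! T, IsSExtension pr S T := by
  have hW := isAdmissibleRel_transHull_of_mem_sigmaStar hS
  have hindiff : indiff (TransHull (relComp S (relComp (asymPart pr) S))) = S := by
    refine hmax _ ?_ fun p hp => ?_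
    · exact IsAdmissibleRel.mem_sigmaStar (hn.isEquivRel_indiff hW.toIsStrictOrderRel)
        { hW with compat := hn.isCompatibleRel_indiff hW.toIsStrictOrderRel }
    · have hnot := hW.compat.notMem_of_mem hS.1 hW.toIsStrictOrderRel
      exact hW.mem_indiff_iff.mpr ⟨hnot hp, hnot (hS.1.2.1 _ _ hp)⟩
  have hcomp : ∀ a b, (a, b) ∉ S →
      (a, b) ∈ TransHull (relComp S (relComp (asymPart pr) S)) ∨
        (b, a) ∈ TransHull (relComp S (relComp (asymPart pr) S)) := by
    intro a b hab
    rw [← hindiff, hW.mem_indiff_iff] at hab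
    tauto
  obtain ⟨T, hT, hWT⟩ := exists_sExtension_of_isAdmissibleRel hS.1 hW
  refine ⟨T, hT, fun T' hT' => ?_⟩
  rw [hT'.eq_union hT'.isAdmissibleRel_asymPart.transHull_subset hcomp, hT.eq_union hWT hcomp]

end Admissible

theorem unique_S_extension_iff_general (pr S : Set (X × X)) :
    (∃! T : Set (X × X), IsSExtension pr S T) ↔
      (S ∈ SigmaStar pr ∧ (∀ S' ∈ SigmaStar pr, S ⊆ S' → S' = S) ∧
        IsNegTransRel (TransHull (relComp S (relComp (asymPart pr) S)))) :=
  ⟨fun hu => ⟨mem_sigmaStar_of_existsUnique_sExtension hu,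
      fun _ hS' hSS' => eq_of_existsUnique_sExtension hu hS' hSS',
      isNegTransRel_of_existsUnique_sExtension hu⟩,
    fun ⟨hS, hmax, hn⟩ => existsUnique_sExtension_of_maximal hS hmax hn⟩

theorem unique_S_extension_iff [Nonempty X] (pr S : Set (X × X))
    (hpr : IsPartialOrderRel pr) (hS : IsEquivRel S) :
    (∃! T : Set (X × X), IsSExtension pr S T) ↔
      (S ∈ SigmaStar pr ∧ (∀ S' ∈ SigmaStar pr, S ⊆ S' → S' = S) ∧
        IsNegTransRel (TransHull (relComp S (relComp (asymPart pr) S)))) :=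
  unique_S_extension_iff_general pr S
end

section
/- Let ≼ be a partial order on a nonempty set X with asymmetric part P_≼ and S an equivalence relation on X such that P_≼ ∘ S = S ∘ P_≼ = P_≼. Then the union ≼ ∪ S is a preorder on X whose symmetric part coincides with S. -/
variable {X : Type*}

section UnionWithEquivalence

variable {G S : Set (X × X)}

theorem mem_asymPart_or_eq_of_mem (hanti : ∀ x y, (x, y) ∈ G → (y, x) ∈ G → x = y)
    {x y : X} (hxy : (x, y) ∈ G) : (x, y) ∈ asymPart G ∨ x = y := by
  by_cases hyx : (y, x) ∈ G
  · exact Or.inr (hanti x y hxy hyx)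
  · exact Or.inl ⟨hxy, hyx⟩

theorem relComp_subset_union_of_asymPart_comp (hanti : ∀ x y, (x, y) ∈ G → (y, x) ∈ G → x = y)
    (h : relComp (asymPart G) S ⊆ asymPart G) : relComp G S ⊆ G ∪ S := by
  rintro ⟨x, z⟩ ⟨y, hxy, hyz⟩
  rcases mem_asymPart_or_eq_of_mem hanti hxy with hP | rfl
  · exact Or.inl (h ⟨y, hP, hyz⟩).1
  · exact Or.inr hyz

theorem relComp_subset_union_of_comp_asymPart (hanti : ∀ x y, (x, y) ∈ G → (y, x) ∈ G → x = y)
    (h : relComp S (asymPart G) ⊆ asymPart G) : relComp S G ⊆ G ∪ S := by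
  rintro ⟨x, z⟩ ⟨y, hxy, hyz⟩
  rcases mem_asymPart_or_eq_of_mem hanti hyz with hP | rfl
  · exact Or.inl (h ⟨y, hxy, hP⟩).1
  · exact Or.inr hxy

theorem union_trans (hG : ∀ x y z, (x, y) ∈ G → (y, z) ∈ G → (x, z) ∈ G)
    (hS : ∀ x y z, (x, y) ∈ S → (y, z) ∈ S → (x, z) ∈ S)
    (hGS : relComp G S ⊆ G ∪ S) (hSG : relComp S G ⊆ G ∪ S) :
    ∀ x y z, (x, y) ∈ G ∪ S → (y, z) ∈ G ∪ S → (x, z) ∈ G ∪ S := by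
  rintro x y z (hxy | hxy) (hyz | hyz)
  · exact Or.inl (hG x y z hxy hyz)
  · exact hGS ⟨y, hxy, hyz⟩
  · exact hSG ⟨y, hxy, hyz⟩
  · exact Or.inr (hS x y z hxy hyz)

-- Otherwise `(x, y) ∈ P_G` and `(x, x) ∈ P_G ∘ S ⊆ P_G`, but `P_G` is irreflexive.
theorem eq_of_mem_of_swap_mem (hanti : ∀ x y, (x, y) ∈ G → (y, x) ∈ G → x = y)
    (h : relComp (asymPart G) S ⊆ asymPart G) {x y : X} (hxy : (x, y) ∈ G) (hyx : (y, x) ∈ S) :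
    x = y := by
  rcases mem_asymPart_or_eq_of_mem hanti hxy with hP | hxy
  · have hxx : (x, x) ∈ asymPart G := h ⟨y, hP, hyx⟩
    exact absurd hxx.1 hxx.2
  · exact hxy

theorem symPart_union_eq (hanti : ∀ x y, (x, y) ∈ G → (y, x) ∈ G → x = y)
    (hrefl : ∀ x, (x, x) ∈ S) (hsymm : ∀ x y, (x, y) ∈ S → (y, x) ∈ S)
    (h : relComp (asymPart G) S ⊆ asymPart G) : symPart (G ∪ S) = S := by
  refine Set.Subset.antisymm ?_ fun p hp => ⟨Or.inr hp, Or.inr (hsymm _ _ hp)⟩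
  rintro ⟨x, y⟩ ⟨hxy | hxy, (hyx | hyx : (y, x) ∈ G ∪ S)⟩
  · obtain rfl := hanti x y hxy hyx
    exact hrefl x
  · obtain rfl := eq_of_mem_of_swap_mem hanti h hxy hyx
    exact hrefl x
  · obtain rfl := eq_of_mem_of_swap_mem hanti h hyx hxy
    exact hrefl y
  · exact hxy

end UnionWithEquivalence

theorem union_isPreorder_and_symPart_eq_general (pr S : Set (X × X))
    (hpr : IsPartialOrderRel pr) (hS : IsEquivRel S)
    (h1 : relComp (asymPart pr) S = asymPart pr)
    (h2 : relComp S (asymPart pr) = asymPart pr) :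
    IsPreorderRel (pr ∪ S) ∧ symPart (pr ∪ S) = S := by
  obtain ⟨⟨-, htrans⟩, hanti⟩ := hpr
  obtain ⟨hrefl, hsymm, hStrans⟩ := hS
  refine ⟨⟨fun x => Or.inr (hrefl x), union_trans htrans hStrans ?_ ?_⟩,
    symPart_union_eq hanti hrefl hsymm h1.le⟩
  · exact relComp_subset_union_of_asymPart_comp hanti h1.le
  · exact relComp_subset_union_of_comp_asymPart hanti h2.le

theorem union_isPreorder_and_symPart_eq [Nonempty X] (pr S : Set (X × X))
    (hpr : IsPartialOrderRel pr) (hS : IsEquivRel S)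
    (h1 : relComp (asymPart pr) S = asymPart pr)
    (h2 : relComp S (asymPart pr) = asymPart pr) :
    IsPreorderRel (pr ∪ S) ∧ symPart (pr ∪ S) = S :=
  union_isPreorder_and_symPart_eq_general pr S hpr hS h1 h2
end

section
/- Let ≼ be a partial order on a nonempty set X with asymmetric part P_≼ and let S be an equivalence relation on X that belongs to Σ*(≼) and is maximal with respect to inclusion in Σ(≼). Then for any x,y ∈ X exactly one of the following three alternatives holds: (x,y) ∈ S, or (x,y) ∈ S ∘ P_≼ ∘ S, or (y,x) ∈ S ∘ P_≼ ∘ S. -/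
/-! If `(x, y)` lies neither in `S` nor in `Q = S ∘ P_≼ ∘ S` nor in its converse, merging the
`S`-classes of `x` and `y` gives a strictly larger equivalence relation that is still in `Σ(≼)`:
a `P_≼`-step inside the merged class would, after conjugating by `S`, be a `Q`-step between `x`
and `y`. Maximality therefore forces the alternatives to cover everything, and they exclude
each other because `Q` is irreflexive and, by acyclicity, asymmetric. -/

variable {X : Type*}

theorem IsAcyclicRel.asymm {G : Set (X × X)} (hG : IsAcyclicRel G) {a b : X}
    (hab : (a, b) ∈ G) : (b, a) ∉ G := by
  simpa using hG 1 ![a, b] fun i => by fin_cases i; simpa using hab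

namespace IsEquivRel

variable {S P : Set (X × X)}

theorem notMem_relComp_of_mem (hS : IsEquivRel S)
    (hirr : ∀ x, (x, x) ∉ relComp S (relComp P S)) {a b : X} (hab : (a, b) ∈ S) :
    (a, b) ∉ relComp S (relComp P S) := fun ⟨z, haz, w, hzw, hwb⟩ =>
  hirr b ⟨z, hS.2.2 _ _ _ (hS.2.1 _ _ hab) haz, w, hzw, hwb⟩

def joinClasses (S : Set (X × X)) (x y : X) : Set (X × X) :=
  {p | p ∈ S ∨ ((p.1, x) ∈ S ∧ (y, p.2) ∈ S) ∨ ((p.1, y) ∈ S ∧ (x, p.2) ∈ S)}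

theorem subset_joinClasses (x y : X) : S ⊆ joinClasses S x y := fun _ hp => Or.inl hp

theorem mem_joinClasses (hS : IsEquivRel S) (x y : X) : (x, y) ∈ joinClasses S x y :=
  Or.inr (Or.inl ⟨hS.1 x, hS.1 y⟩)

theorem joinClasses_isEquivRel (hS : IsEquivRel S) (x y : X) :
    IsEquivRel (joinClasses S x y) := by
  obtain ⟨hrefl, hsymm, htrans⟩ := hS
  refine ⟨fun a => Or.inl (hrefl a), ?_, ?_⟩
  · rintro a b (h | ⟨h₁, h₂⟩ | ⟨h₁, h₂⟩)
    · exact Or.inl (hsymm _ _ h)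
    · exact Or.inr (Or.inr ⟨hsymm _ _ h₂, hsymm _ _ h₁⟩)
    · exact Or.inr (Or.inl ⟨hsymm _ _ h₂, hsymm _ _ h₁⟩)
  · -- the two mixed cases chain `x` to `y` through `S`, so the classes were already equal
    have through {a b c d : X} (had : (a, d) ∈ S) (hdb : (d, b) ∈ S) (hbc : (b, c) ∈ S) :
        (a, c) ∈ S := htrans _ _ _ (htrans _ _ _ had hdb) hbc
    rintro a b c (h | ⟨h₁, h₂⟩ | ⟨h₁, h₂⟩) (g | ⟨g₁, g₂⟩ | ⟨g₁, g₂⟩)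
    · exact Or.inl (htrans _ _ _ h g)
    · exact Or.inr (Or.inl ⟨htrans _ _ _ h g₁, g₂⟩)
    · exact Or.inr (Or.inr ⟨htrans _ _ _ h g₁, g₂⟩)
    · exact Or.inr (Or.inl ⟨h₁, htrans _ _ _ h₂ g⟩)
    · exact Or.inl (through h₁ (hsymm _ _ (htrans _ _ _ h₂ g₁)) g₂)
    · exact Or.inl (htrans _ _ _ h₁ g₂)
    · exact Or.inr (Or.inr ⟨h₁, htrans _ _ _ h₂ g⟩)
    · exact Or.inl (htrans _ _ _ h₁ g₂)
    · exact Or.inl (through h₁ (hsymm _ _ (htrans _ _ _ h₂ g₁)) g₂)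

theorem irrefl_relComp_joinClasses (hS : IsEquivRel S)
    (hirr : ∀ x, (x, x) ∉ relComp S (relComp P S)) {x y : X}
    (hxy : (x, y) ∉ relComp S (relComp P S)) (hyx : (y, x) ∉ relComp S (relComp P S)) (a : X) :
    (a, a) ∉ relComp (joinClasses S x y) (relComp P (joinClasses S x y)) := by
  rintro ⟨u, hau, v, huv, hva⟩
  rcases (joinClasses_isEquivRel hS x y).2.2 _ _ _ hva hau with h | ⟨hvx, hyu⟩ | ⟨hvy, hxu⟩
  · exact hirr u ⟨u, hS.1 u, v, huv, h⟩
  · exact hyx ⟨u, hyu, v, huv, hvx⟩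
  · exact hxy ⟨u, hxu, v, huv, hvy⟩

end IsEquivRel

open IsEquivRel in
theorem mem_of_maximal_of_notMem_relComp {pr S : Set (X × X)} (hmem : S ∈ SigmaCol pr)
    (hmax : ∀ S' ∈ SigmaCol pr, S ⊆ S' → S' = S) {x y : X}
    (hxy : (x, y) ∉ relComp S (relComp (asymPart pr) S))
    (hyx : (y, x) ∉ relComp S (relComp (asymPart pr) S)) : (x, y) ∈ S := by
  have hjoin : joinClasses S x y ∈ SigmaCol pr :=
    ⟨joinClasses_isEquivRel hmem.1 x y, irrefl_relComp_joinClasses hmem.1 hmem.2 hxy hyx⟩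
  rw [← hmax _ hjoin (subset_joinClasses x y)]
  exact mem_joinClasses hmem.1 x y

theorem trichotomy_of_maximal_general (pr S : Set (X × X))
    (hstar : S ∈ SigmaStar pr) (hmem : S ∈ SigmaCol pr)
    (hmax : ∀ S' ∈ SigmaCol pr, S ⊆ S' → S' = S) (x y : X) :
    ((x, y) ∈ S ∧ (x, y) ∉ relComp S (relComp (asymPart pr) S) ∧ (y, x) ∉ relComp S (relComp (asymPart pr) S)) ∨
    ((x, y) ∉ S ∧ (x, y) ∈ relComp S (relComp (asymPart pr) S) ∧ (y, x) ∉ relComp S (relComp (asymPart pr) S)) ∨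
    ((x, y) ∉ S ∧ (x, y) ∉ relComp S (relComp (asymPart pr) S) ∧ (y, x) ∈ relComp S (relComp (asymPart pr) S)) := by
  have hSQ {a b : X} (hab : (a, b) ∈ S) : (a, b) ∉ relComp S (relComp (asymPart pr) S) :=
    hmem.1.notMem_relComp_of_mem hmem.2 hab
  by_cases hS : (x, y) ∈ S
  · exact Or.inl ⟨hS, hSQ hS, hSQ (hmem.1.2.1 _ _ hS)⟩
  by_cases hxy : (x, y) ∈ relComp S (relComp (asymPart pr) S)
  · exact Or.inr (Or.inl ⟨hS, hxy, hstar.2.asymm hxy⟩)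
  by_cases hyx : (y, x) ∈ relComp S (relComp (asymPart pr) S)
  · exact Or.inr (Or.inr ⟨hS, hxy, hyx⟩)
  exact absurd (mem_of_maximal_of_notMem_relComp hmem hmax hxy hyx) hS

theorem trichotomy_of_maximal [Nonempty X] (pr S : Set (X × X))
    (hpr : IsPartialOrderRel pr)
    (hstar : S ∈ SigmaStar pr) (hmem : S ∈ SigmaCol pr)
    (hmax : ∀ S' ∈ SigmaCol pr, S ⊆ S' → S' = S) (x y : X) :
    ((x, y) ∈ S ∧ (x, y) ∉ relComp S (relComp (asymPart pr) S) ∧ (y, x) ∉ relComp S (relComp (asymPart pr) S)) ∨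
    ((x, y) ∉ S ∧ (x, y) ∈ relComp S (relComp (asymPart pr) S) ∧ (y, x) ∉ relComp S (relComp (asymPart pr) S)) ∨
    ((x, y) ∉ S ∧ (x, y) ∉ relComp S (relComp (asymPart pr) S) ∧ (y, x) ∈ relComp S (relComp (asymPart pr) S)) :=
  trichotomy_of_maximal_general pr S hstar hmem hmax x y
end
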